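/- For 2 ≤ k < n and 0 ≤ j < k!, the permutations of {1,...,n} occupying positions j·n!/k! + 1 through (j+1)·n!/k! in the appearance order within M_n are exactly those whose circular shift representation [j_2 ⋯ j_n]_c has first k-1 digits j_2, ..., j_k equal to the digits of j in the factorial-type expansion j = ∑_{i=2}^k j_i · k!/i!. -/

import Mathlib

def pcyc (k : ℕ) : Equiv.Perm ℕ := (List.range' 1 k).formPerm

/-- The ordered composition `p_2^{e 2} ∘ p_3^{e 3} ∘ ⋯ ∘ p_n^{e n}`. -/
def circProd (n : ℕ) (e : ℕ → ℕ) : Equiv.Perm ℕ :=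
  ((List.range' 2 (n - 1)).map fun i => (pcyc i) ^ (e i)).prod

/-- All length-`n` windows of `s`. -/
def windows (n : ℕ) (s : List ℕ) : List (List ℕ) :=
  (List.range (s.length + 1 - n)).map fun i => (s.drop i).take n

/-- The permutations of `{1,…,n}` in order of first appearance as substrings of `s`. -/
def permsOrder (n : ℕ) (s : List ℕ) : List (List ℕ) :=
  (((windows n s).filter fun w => decide (w.Perm (List.range' 1 n))).reverse.dedup).reverse

/-- Length of the maximal overlap: the longest suffix of `s` that is a prefix of `t`. -/
def ov (s t : List ℕ) : ℕ :=
  ((List.range (min s.length t.length + 1)).filter fun l => (t.take l).isSuffixOf s).foldr max 0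

/-- Concatenate with maximal overlap. -/
def mergeOv (s t : List ℕ) : List ℕ := s ++ t.drop (ov s t)

/-- The recursively constructed superpermutation `M_n`. -/
def Mrec : ℕ → List ℕ
  | 0 => []
  | 1 => [1]
  | n + 2 =>
      ((permsOrder (n + 1) (Mrec (n + 1))).map fun P => P ++ [n + 2] ++ P).foldl mergeOv []

/-!
Reading off the permutations of `Mrec n` in order of first appearance gives `canonOrder n`, whose
`m`-th entry is the circular-shift word whose digits are the factorial-base digits of `m`. By
induction: `Mrec (n + 1)` glues the blocks `P ++ (n + 1) :: P` for `P` in that order with maximal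
overlap, two distinct blocks overlap in at most `n` letters, and so the only new windows that are
permutations are the `n + 1` windows of each block. Those are `P` rotated by `i` with `n + 1`
inserted, i.e. the words with last digit `i`, since `p_{n+1}^i` rotates `1, …, n + 1` by `i`.
Hence the slice `[j * (n!/k!), (j + 1) * (n!/k!))` consists of the `m` with `m / (n!/k!) = j`, whose
first `k - 1` digits are the digits of `j`.
-/

open Nat

section FactorialBase

def factorialBaseValue (e : ℕ → ℕ) (n : ℕ) : ℕ :=
  ∑ i ∈ Finset.Icc 2 n, e i * (n ! / i !)

def factorialDigit (n m i : ℕ) : ℕ := m / (n ! / i !) % i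

theorem factorial_div_mul_factorial_div {i k n : ℕ} (hik : i ≤ k) (hkn : k ≤ n) :
    n ! / k ! * (k ! / i !) = n ! / i ! := by
  rw [Nat.div_mul_div_comm (factorial_dvd_factorial hkn) (factorial_dvd_factorial hik),
    mul_comm (k !) (i !), Nat.mul_div_mul_right _ _ (factorial_pos k)]

theorem factorial_succ_div_factorial {i n : ℕ} (h : i ≤ n) :
    (n + 1)! / i ! = n ! / i ! * (n + 1) := by
  rw [← factorial_div_mul_factorial_div h n.le_succ, factorial_succ,
    Nat.mul_div_cancel _ (factorial_pos n), mul_comm]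

theorem factorialBaseValue_succ (e : ℕ → ℕ) {n : ℕ} (hn : 1 ≤ n) :
    factorialBaseValue e (n + 1) = factorialBaseValue e n * (n + 1) + e (n + 1) := by
  rw [factorialBaseValue, Finset.sum_Icc_succ_top (by omega), Nat.div_self (factorial_pos _),
    mul_one, factorialBaseValue, Finset.sum_mul]
  congr 1
  refine Finset.sum_congr rfl fun i hi => ?_
  rw [factorial_succ_div_factorial (Finset.mem_Icc.1 hi).2, mul_assoc]

theorem factorialBaseValue_div {e : ℕ → ℕ} {i n : ℕ}
    (he : ∀ i ∈ Finset.Icc 2 n, e i < i) (hi : 1 ≤ i) (hin : i ≤ n) :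
    factorialBaseValue e n / (n ! / i !) = factorialBaseValue e i := by
  induction n, hin using Nat.le_induction with
  | base => rw [Nat.div_self (factorial_pos i), Nat.div_one]
  | succ n hin ih =>
    have hlast := he (n + 1) (Finset.mem_Icc.2 ⟨by omega, le_rfl⟩)
    rw [factorialBaseValue_succ e (hi.trans hin), factorial_succ_div_factorial hin,
      mul_comm (n ! / i !), ← Nat.div_div_eq_div_mul, mul_comm _ (n + 1),
      Nat.mul_add_div n.succ_pos, Nat.div_eq_of_lt hlast, add_zero,
      ih fun i hi => he i (Finset.Icc_subset_Icc_right n.le_succ hi)]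

theorem factorialBaseValue_mod {e : ℕ → ℕ} {i : ℕ} (hi : 2 ≤ i) (he : e i < i) :
    factorialBaseValue e i % i = e i := by
  obtain ⟨m, rfl⟩ : ∃ m, i = m + 1 := ⟨i - 1, by omega⟩
  rw [factorialBaseValue_succ e (by omega), Nat.mul_add_mod_self_right, Nat.mod_eq_of_lt he]

theorem factorialDigit_factorialBaseValue {e : ℕ → ℕ} {n i : ℕ}
    (he : ∀ i ∈ Finset.Icc 2 n, e i < i) (hi : i ∈ Finset.Icc 2 n) :
    factorialDigit n (factorialBaseValue e n) i = e i := by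
  obtain ⟨h2, hin⟩ := Finset.mem_Icc.1 hi
  rw [factorialDigit, factorialBaseValue_div he (by omega) hin,
    factorialBaseValue_mod h2 (he i hi)]

theorem factorialDigit_eq_factorialDigit_div {i k n : ℕ} (m : ℕ) (hik : i ≤ k)
    (hkn : k ≤ n) :
    factorialDigit n m i = factorialDigit k (m / (n ! / k !)) i := by
  rw [factorialDigit, factorialDigit, Nat.div_div_eq_div_mul,
    factorial_div_mul_factorial_div hik hkn]

end FactorialBase

section CircularShift

theorem map_pcyc_pow_range' (N i : ℕ) :
    (List.range' 1 N).map ⇑(pcyc N ^ i) = (List.range' 1 N).rotate i := by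
  refine List.ext_getElem (by simp) fun m h₁ h₂ => ?_
  rw [List.getElem_map, List.getElem_rotate]
  unfold pcyc
  rw [List.formPerm_pow_apply_getElem _ List.nodup_range' _ _ (by simpa using h₁)]

theorem circProd_apply_of_lt {n x : ℕ} (e : ℕ → ℕ) (hx : n < x) : circProd n e x = x := by
  have hmem : circProd n e ∈ fixingSubgroup (Equiv.Perm ℕ) {x | n < x} := by
    refine Subgroup.list_prod_mem _ fun σ hσ => ?_
    obtain ⟨i, hi, rfl⟩ := List.mem_map.1 hσ
    refine Subgroup.pow_mem _ ((mem_fixingSubgroup_iff _).2 fun y hy => ?_) _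
    simp only [Set.mem_ofPred_eq, List.mem_range'_1] at hi hy
    exact List.formPerm_apply_of_notMem (by simp; omega)
  exact (mem_fixingSubgroup_iff _).1 hmem x hx

theorem circProd_succ (e : ℕ → ℕ) {n : ℕ} (hn : 1 ≤ n) :
    circProd (n + 1) e = circProd n e * pcyc (n + 1) ^ e (n + 1) := by
  obtain ⟨m, rfl⟩ : ∃ m, n = m + 1 := ⟨n - 1, by omega⟩
  rw [circProd, circProd, show m + 1 + 1 - 1 = m + 1 by omega, List.range'_concat,
    List.map_append, List.prod_append, List.map_singleton, List.prod_singleton,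
    show 2 + 1 * m = m + 1 + 1 by omega, show m + 1 - 1 = m by omega]

def circWord (n : ℕ) (e : ℕ → ℕ) : List ℕ := (List.range' 1 n).map (circProd n e)

theorem circWord_congr {n : ℕ} {e e' : ℕ → ℕ} (h : ∀ i ∈ Finset.Icc 2 n, e i = e' i) :
    circWord n e = circWord n e' := by
  have : circProd n e = circProd n e' := by
    refine congrArg List.prod (List.map_congr_left fun i hi => ?_)
    rw [h i (by simp only [List.mem_range'_1] at hi; simp; omega)]
  rw [circWord, circWord, this]

theorem circWord_succ {n : ℕ} (hn : 1 ≤ n) {e : ℕ → ℕ} (he : e (n + 1) ≤ n) :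
    circWord (n + 1) e =
      (circWord n e).drop (e (n + 1)) ++ (n + 1) :: (circWord n e).take (e (n + 1)) := by
  have hlen : (circWord n e).length = n := by simp [circWord]
  calc circWord (n + 1) e
      = ((List.range' 1 (n + 1)).map ⇑(pcyc (n + 1) ^ e (n + 1))).map (circProd n e) := by
        rw [circWord, circProd_succ e hn, List.map_map]; rfl
    _ = (circWord n e ++ [n + 1]).rotate (e (n + 1)) := by
        rw [map_pcyc_pow_range', List.map_rotate, List.range'_concat, List.map_append,
          List.map_singleton, one_mul, add_comm 1 n, circProd_apply_of_lt e n.lt_succ_self,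
          circWord]
    _ = _ := by
        rw [List.rotate_eq_drop_append_take (by simp [hlen]; omega),
          List.drop_append_of_le_length (by omega), List.take_append_of_le_length (by omega)]
        simp

def blockWindows (n : ℕ) (w : List ℕ) : List (List ℕ) :=
  (List.range (n + 1)).map fun i => w.drop i ++ (n + 1) :: w.take i

def canonOrder (n : ℕ) : List (List ℕ) :=
  (List.range n !).map fun m => circWord n (factorialDigit n m)

theorem range_mul_eq_flatMap (a b : ℕ) :
    List.range (a * b) = (List.range a).flatMap fun m => (List.range b).map (m * b + ·) := by
  induction a with
  | zero => simp
  | succ a ih =>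
    rw [add_mul, one_mul, List.range_add, ih, List.range_succ, List.flatMap_append]
    simp

theorem canonOrder_succ {n : ℕ} (hn : 1 ≤ n) :
    canonOrder (n + 1) = (canonOrder n).flatMap (blockWindows n) := by
  rw [canonOrder, factorial_succ, mul_comm, range_mul_eq_flatMap, List.map_flatMap, canonOrder,
    List.flatMap_map]
  refine List.flatMap_congr fun m _ => ?_
  rw [blockWindows, List.map_map]
  refine List.map_congr_left fun i hi => ?_
  have hi : i < n + 1 := List.mem_range.1 hi
  have hquot : (m * (n + 1) + i) / ((n + 1)! / n !) = m := by
    rw [factorial_succ, Nat.mul_div_cancel _ (factorial_pos n), mul_comm,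
      Nat.mul_add_div n.succ_pos, Nat.div_eq_of_lt hi, add_zero]
  have hlast : factorialDigit (n + 1) (m * (n + 1) + i) (n + 1) = i := by
    rw [factorialDigit, Nat.div_self (factorial_pos _), Nat.div_one, Nat.mul_add_mod_self_right,
      Nat.mod_eq_of_lt hi]
  have hinit : circWord n (factorialDigit (n + 1) (m * (n + 1) + i)) =
      circWord n (factorialDigit n m) := circWord_congr fun i' hi' => by
    rw [factorialDigit_eq_factorialDigit_div _ (Finset.mem_Icc.1 hi').2 n.le_succ, hquot]
  simp only [Function.comp_apply]
  rw [circWord_succ hn (by omega), hlast, hinit]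

end CircularShift

section Windows

theorem length_eq_of_perm_range' {n : ℕ} {w : List ℕ} (hw : w.Perm (List.range' 1 n)) :
    w.length = n := by
  simp [hw.length_eq]

theorem succ_notMem_of_perm_range' {n : ℕ} {w : List ℕ} (hw : w.Perm (List.range' 1 n)) :
    n + 1 ∉ w := by
  rw [hw.mem_iff, List.mem_range'_1]
  omega

theorem windows_append_of_length_add_one {N : ℕ} (s v u : List ℕ) (hv : v.length + 1 = N) :
    windows N (s ++ v ++ u) = windows N (s ++ v) ++ windows N (v ++ u) := by
  have hlen : (s ++ v ++ u).length + 1 - N = s.length + u.length := by simp; omega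
  have hlen' : (s ++ v).length + 1 - N = s.length := by simp; omega
  have hlen'' : (v ++ u).length + 1 - N = u.length := by simp; omega
  rw [windows, hlen, List.range_add, List.map_append, windows, hlen', windows, hlen'', List.map_map]
  congr 1
  · refine List.map_congr_left fun i hi => ?_
    rw [List.mem_range] at hi
    rw [List.drop_append_of_le_length (by omega),
      List.drop_append_of_le_length (by omega),
      List.take_append_of_le_length (by simp; omega)]
  · refine List.map_congr_left fun i _ => ?_
    simp only [Function.comp_apply]
    rw [List.append_assoc, ← List.drop_drop, List.drop_left]

theorem subset_of_mem_windows {N : ℕ} {s t : List ℕ} (ht : t ∈ windows N s) : t ⊆ s := by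
  obtain ⟨i, -, rfl⟩ := List.mem_map.1 ht
  exact fun x hx => List.drop_subset _ _ (List.take_subset _ _ hx)

def block (n : ℕ) (w : List ℕ) : List ℕ := w ++ (n + 1) :: w

theorem windows_block {n : ℕ} {w : List ℕ} (hw : w.length = n) :
    windows (n + 1) (block n w) = blockWindows n w := by
  have hlen : (block n w).length + 1 - (n + 1) = n + 1 := by simp [block, hw]
  rw [windows, hlen, blockWindows]
  refine List.map_congr_left fun i hi => ?_
  rw [List.mem_range] at hi
  rw [block, List.drop_append_of_le_length (by omega), List.take_append,
    List.take_of_length_le (by simp; omega), List.length_drop, hw,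
    show n + 1 - (n - i) = i + 1 by omega, List.take_succ_cons]

def filterPerms (N : ℕ) (L : List (List ℕ)) : List (List ℕ) :=
  L.filter fun v => decide (v.Perm (List.range' 1 N))

theorem perm_of_mem_blockWindows {n : ℕ} {w v : List ℕ} (hw : w.Perm (List.range' 1 n))
    (hv : v ∈ blockWindows n w) : v.Perm (List.range' 1 (n + 1)) := by
  obtain ⟨i, -, rfl⟩ := List.mem_map.1 hv
  have hrotate : (w.drop i ++ w.take i).Perm w := by
    simpa only [List.take_append_drop] using
      List.perm_append_comm (l₁ := w.drop i) (l₂ := w.take i)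
  rw [List.range'_concat, one_mul, add_comm 1 n]
  exact (List.perm_middle.trans ((hrotate.trans hw).cons _)).trans
    (List.perm_append_singleton _ _).symm

theorem filterPerms_blockWindows {n : ℕ} {w : List ℕ} (hw : w.Perm (List.range' 1 n)) :
    filterPerms (n + 1) (blockWindows n w) = blockWindows n w :=
  List.filter_eq_self.2 fun _ hv => decide_eq_true (perm_of_mem_blockWindows hw hv)

theorem filterPerms_windows_eq_nil {N : ℕ} (hN : 1 ≤ N) {s : List ℕ} (hs : N ∉ s) :
    filterPerms N (windows N s) = [] :=
  List.filter_eq_nil_iff.2 fun _ hv hperm => hs <| subset_of_mem_windows hv <|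
    (of_decide_eq_true hperm).mem_iff.2 (by simp; omega)

theorem filterPerms_append (N : ℕ) (L L' : List (List ℕ)) :
    filterPerms N (L ++ L') = filterPerms N L ++ filterPerms N L' :=
  List.filter_append _ _

theorem eq_of_drop_append_cons_take_eq {α : Type*} {a : α} {v v' : List α} (ha : a ∉ v)
    {i i' : ℕ} (hi : i ≤ v.length) (hi' : i' ≤ v'.length) (hlen : v.length = v'.length)
    (h : v.drop i ++ a :: v.take i = v'.drop i' ++ a :: v'.take i') : i = i' ∧ v = v' := by
  obtain ⟨hdrop, -, htake⟩ := (List.append_cons_inj_of_notMem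
    (fun h => ha (List.mem_of_mem_drop h)) (fun h => ha (List.mem_of_mem_take h))).1 h
  refine ⟨?_, by rw [← List.take_append_drop i v, hdrop, htake, List.take_append_drop]⟩
  have := congrArg List.length hdrop
  simp only [List.length_drop] at this
  omega

theorem nodup_flatMap_blockWindows {n : ℕ} {L : List (List ℕ)}
    (hperm : ∀ v ∈ L, v.Perm (List.range' 1 n)) (hnd : L.Nodup) :
    (L.flatMap (blockWindows n)).Nodup := by
  have hinj : ∀ v ∈ L, ∀ v' ∈ L, ∀ i < n + 1, ∀ i' < n + 1,
      v.drop i ++ (n + 1) :: v.take i = v'.drop i' ++ (n + 1) :: v'.take i' → i = i' ∧ v = v' :=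
    fun v hv v' hv' i hi i' hi' h => by
      have hlen := length_eq_of_perm_range' (hperm v hv)
      have hlen' := length_eq_of_perm_range' (hperm v' hv')
      exact eq_of_drop_append_cons_take_eq (succ_notMem_of_perm_range' (hperm v hv))
        (by omega) (by omega) (by omega) h
  refine List.nodup_flatMap.2 ⟨fun v hv => ?_, hnd.imp_of_mem fun hv hv' hne => ?_⟩
  · exact List.nodup_range.map_on fun i hi i' hi' h =>
      (hinj v hv v hv i (List.mem_range.1 hi) i' (List.mem_range.1 hi') h).1
  · simp only [Function.onFun, blockWindows]
    rintro _ hu hu'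
    obtain ⟨i, hi, rfl⟩ := List.mem_map.1 hu
    obtain ⟨i', hi', h⟩ := List.mem_map.1 hu'
    exact hne (hinj _ hv _ hv' i (List.mem_range.1 hi) i' (List.mem_range.1 hi') h.symm).2

end Windows

section Overlap

theorem take_ov_suffix (s t : List ℕ) : t.take (ov s t) <:+ s := by
  set L := (List.range (min s.length t.length + 1)).filter fun l => (t.take l).isSuffixOf s
  have hzero : 0 ∈ L := by simp [L]
  have hmem : ov s t ∈ L :=
    List.maximum_mem (List.foldr_max_of_ne_nil (List.ne_nil_of_mem hzero)).symm
  exact List.isSuffixOf_iff_suffix.1 (List.mem_filter.1 hmem).2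

theorem ov_le {s t : List ℕ} {b : ℕ}
    (h : ∀ l ≤ min s.length t.length, t.take l <:+ s → l ≤ b) : ov s t ≤ b :=
  List.max_le_of_forall_le _ _ fun l hl => by
    obtain ⟨hl, hsuf⟩ := List.mem_filter.1 hl
    exact h l (by simp at hl; omega) (List.isSuffixOf_iff_suffix.1 hsuf)

theorem mergeOv_nil (t : List ℕ) : mergeOv [] t = t := by
  rw [mergeOv, Nat.le_zero.1 (ov_le fun l hl _ => by simpa using hl), List.drop_zero,
    List.nil_append]

theorem suffix_mergeOv (s t : List ℕ) : t <:+ mergeOv s t := by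
  obtain ⟨u, hu⟩ := take_ov_suffix s t
  refine ⟨u, ?_⟩
  rw [mergeOv]
  nth_rw 1 [← hu]
  rw [List.append_assoc, List.take_append_drop]

end Overlap

section Superpermutation

variable {n : ℕ}

theorem ov_block_le {acc w₀ w : List ℕ} (hw₀ : w₀.Perm (List.range' 1 n))
    (hw : w.Perm (List.range' 1 n)) (hne : w₀ ≠ w) (hsuf : block n w₀ <:+ acc) :
    ov acc (block n w) ≤ n := by
  have hlen₀ := length_eq_of_perm_range' hw₀
  have hlen := length_eq_of_perm_range' hw
  refine ov_le fun c hc hc_suf => ?_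
  by_contra! hnc
  have hc_le : c ≤ 2 * n + 1 := by simp [block, hlen] at hc; omega
  have htake : (block n w).take c = w ++ (n + 1) :: w.take (c - (n + 1)) := by
    rw [block, List.take_append, List.take_of_length_le (by omega), hlen,
      show c - n = c - (n + 1) + 1 by omega, List.take_succ_cons]
  have hdrop : (block n w).take c = w₀.drop (2 * n + 1 - c) ++ (n + 1) :: w₀ := by
    have hlen_block : (block n w₀).length = 2 * n + 1 := by simp [block, hlen₀]; omega
    have hlen_take : ((block n w).take c).length = c := by simp [block, hlen]; omega
    have hsub := List.suffix_of_suffix_length_le hc_suf hsuf (by omega)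
    rw [List.suffix_iff_eq_drop.1 hsub, hlen_block, hlen_take, block,
      List.drop_append_of_le_length (by omega)]
  -- the unique occurrence of `n + 1` in `block n w₀` pins down `w₀` as a prefix of `w`
  have hw₀_take : w₀ = w.take (c - (n + 1)) := by
    have hnotin := succ_notMem_of_perm_range' hw₀
    rw [htake] at hdrop
    exact ((List.append_cons_inj_of_notMem (fun h => hnotin (List.mem_of_mem_drop h))
      hnotin).1 hdrop.symm).2.2
  have hc_large : n ≤ c - (n + 1) := by
    have := congrArg List.length hw₀_take
    simp [hlen₀, hlen] at this
    omega
  exact hne (by rw [hw₀_take, List.take_of_length_le (by omega)])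

theorem filterPerms_windows_mergeOv_block {acc w₀ w : List ℕ}
    (hw₀ : w₀.Perm (List.range' 1 n)) (hw : w.Perm (List.range' 1 n)) (hne : w₀ ≠ w)
    (hsuf : block n w₀ <:+ acc) :
    filterPerms (n + 1) (windows (n + 1) (mergeOv acc (block n w))) =
      filterPerms (n + 1) (windows (n + 1) acc) ++ blockWindows n w := by
  have hlen₀ := length_eq_of_perm_range' hw₀
  have hlen := length_eq_of_perm_range' hw
  have hl : ov acc (block n w) ≤ n := ov_block_le hw₀ hw hne hsuf
  obtain ⟨pre, rfl⟩ : w₀ <:+ acc :=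
    List.IsSuffix.trans ⟨w₀ ++ [n + 1], by simp [block]⟩ hsuf
  set l := ov (pre ++ w₀) (block n w)
  obtain ⟨x, hx⟩ : (block n w).take l <:+ w₀ :=
    List.suffix_of_suffix_length_le (take_ov_suffix _ _) (List.suffix_append pre w₀)
      (by simp [hlen₀]; omega)
  have hrest : w₀ ++ (block n w).drop l = x ++ w ++ (n + 1) :: w := by
    rw [← hx, List.append_assoc, List.take_append_drop, block, List.append_assoc]
  -- the new windows straddling the junction lie inside `x ++ w`, so none contains `n + 1`
  have hx_notin : n + 1 ∉ x ++ w := by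
    have hnotin₀ := succ_notMem_of_perm_range' hw₀
    rw [← hx] at hnotin₀
    exact fun h => (List.mem_append.1 h).elim (fun h => hnotin₀ (List.mem_append_left _ h))
      (succ_notMem_of_perm_range' hw)
  rw [mergeOv, windows_append_of_length_add_one pre w₀ _ (by omega), hrest,
    windows_append_of_length_add_one x w _ (by omega), show w ++ (n + 1) :: w = block n w from rfl,
    filterPerms_append, filterPerms_append, filterPerms_windows_eq_nil (by omega) hx_notin,
    windows_block hlen, filterPerms_blockWindows hw, List.nil_append]

theorem filterPerms_windows_foldl_mergeOv :
    ∀ (ws : List (List ℕ)) (acc w₀ : List ℕ), (∀ v ∈ w₀ :: ws, v.Perm (List.range' 1 n)) →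
      (w₀ :: ws).Nodup → block n w₀ <:+ acc →
      filterPerms (n + 1) (windows (n + 1) ((ws.map (block n)).foldl mergeOv acc)) =
        filterPerms (n + 1) (windows (n + 1) acc) ++ ws.flatMap (blockWindows n)
  | [], _, _, _, _, _ => by simp
  | w :: ws, acc, w₀, hperm, hnd, hsuf => by
    have hne : w₀ ≠ w := fun h => (List.nodup_cons.1 hnd).1 (h ▸ List.mem_cons_self)
    rw [List.map_cons, List.foldl_cons,
      filterPerms_windows_foldl_mergeOv ws _ w (fun v hv => hperm v (List.mem_cons_of_mem _ hv))
        hnd.of_cons (suffix_mergeOv _ _),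
      filterPerms_windows_mergeOv_block (hperm _ List.mem_cons_self) (hperm w (by simp)) hne hsuf,
      List.flatMap_cons, List.append_assoc]

theorem filterPerms_windows_foldl_block {L : List (List ℕ)}
    (hperm : ∀ v ∈ L, v.Perm (List.range' 1 n)) (hnd : L.Nodup) :
    filterPerms (n + 1) (windows (n + 1) ((L.map (block n)).foldl mergeOv [])) =
      L.flatMap (blockWindows n) := by
  cases L with
  | nil => simp [windows, filterPerms]
  | cons w₀ ws =>
    have hw₀ := hperm w₀ List.mem_cons_self
    rw [List.map_cons, List.foldl_cons, mergeOv_nil,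
      filterPerms_windows_foldl_mergeOv ws _ w₀ hperm hnd List.suffix_rfl,
      windows_block (length_eq_of_perm_range' hw₀), filterPerms_blockWindows hw₀,
      List.flatMap_cons]

theorem perm_of_mem_permsOrder {N : ℕ} {s v : List ℕ} (hv : v ∈ permsOrder N s) :
    v.Perm (List.range' 1 N) := by
  simp only [permsOrder, List.mem_reverse, List.mem_dedup, List.mem_filter] at hv
  exact of_decide_eq_true hv.2

theorem nodup_permsOrder (N : ℕ) (s : List ℕ) : (permsOrder N s).Nodup :=
  List.nodup_reverse.2 (List.nodup_dedup _)

theorem permsOrder_eq_filterPerms {N : ℕ} {s : List ℕ}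
    (h : (filterPerms N (windows N s)).Nodup) : permsOrder N s = filterPerms N (windows N s) := by
  change (filterPerms N (windows N s)).reverse.dedup.reverse = _
  rw [List.Nodup.dedup (List.nodup_reverse.2 h), List.reverse_reverse]

theorem Mrec_succ (hn : 1 ≤ n) :
    Mrec (n + 1) = ((permsOrder n (Mrec n)).map (block n)).foldl mergeOv [] := by
  obtain ⟨m, rfl⟩ : ∃ m, n = m + 1 := ⟨n - 1, by omega⟩
  rw [Mrec]
  congr 2
  funext w
  simp [block]

theorem permsOrder_Mrec (hn : 2 ≤ n) : permsOrder n (Mrec n) = canonOrder n := by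
  induction n, hn using Nat.le_induction with
  | base => decide
  | succ n hn ih =>
    have hperm : ∀ v ∈ canonOrder n, v.Perm (List.range' 1 n) :=
      fun v hv => perm_of_mem_permsOrder (ih ▸ hv)
    have hnd : (canonOrder n).Nodup := ih ▸ nodup_permsOrder n (Mrec n)
    have hwin := filterPerms_windows_foldl_block hperm hnd
    rw [Mrec_succ (by omega), ih,
      permsOrder_eq_filterPerms (hwin ▸ nodup_flatMap_blockWindows hperm hnd), hwin,
      canonOrder_succ (by omega)]

end Superpermutation

theorem mem_drop_mul_take_canonOrder {n a b : ℕ} (hb : 0 < b) (hab : a * b + b ≤ n !)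
    {w : List ℕ} :
    w ∈ ((canonOrder n).drop (a * b)).take b ↔
      ∃ m, m / b = a ∧ w = circWord n (factorialDigit n m) := by
  rw [canonOrder, ← List.map_drop, ← List.map_take, List.mem_map, List.range_eq_range',
    List.drop_range', List.take_range'_of_length_ge (by omega)]
  simp only [List.mem_range'_1, Nat.div_eq_iff hb]
  refine exists_congr fun m => ?_
  constructor <;> rintro ⟨hm, rfl⟩ <;> exact ⟨by omega, rfl⟩

theorem stmt19 (n k : ℕ) (h2 : 2 ≤ k) (hk : k < n) (j : ℕ) (hj : j < Nat.factorial k)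
    (d : ℕ → ℕ) (hd : ∀ i ∈ Finset.Icc 2 k, d i < i)
    (hsum : j = ∑ i ∈ Finset.Icc 2 k, d i * (Nat.factorial k / Nat.factorial i))
    (w : List ℕ) :
    w ∈ (((permsOrder n (Mrec n)).drop (j * (Nat.factorial n / Nat.factorial k))).take
        (Nat.factorial n / Nat.factorial k)) ↔
      ∃ e : ℕ → ℕ, (∀ i ∈ Finset.Icc 2 n, e i < i) ∧ (∀ i ∈ Finset.Icc 2 k, e i = d i) ∧
        w = (List.range' 1 n).map fun x => circProd n e x := by
  have hq_pos : 0 < n ! / k ! := Nat.div_pos (factorial_le hk.le) (factorial_pos k)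
  have hslice : j * (n ! / k !) + n ! / k ! ≤ n ! :=
    calc j * (n ! / k !) + n ! / k ! = (j + 1) * (n ! / k !) := by ring
      _ ≤ k ! * (n ! / k !) := Nat.mul_le_mul_right _ hj
      _ = n ! := Nat.mul_div_cancel' (factorial_dvd_factorial hk.le)
  have hj_val : j = factorialBaseValue d k := hsum
  rw [permsOrder_Mrec (by omega), mem_drop_mul_take_canonOrder hq_pos hslice]
  constructor
  · rintro ⟨m, hm, rfl⟩
    refine ⟨factorialDigit n m, fun i hi => Nat.mod_lt _ ?_, fun i hi => ?_, rfl⟩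
    · simp only [Finset.mem_Icc] at hi
      omega
    · rw [factorialDigit_eq_factorialDigit_div m (Finset.mem_Icc.1 hi).2 hk.le, hm, hj_val,
        factorialDigit_factorialBaseValue hd hi]
  · rintro ⟨e, he, hed, rfl⟩
    refine ⟨factorialBaseValue e n, ?_,
      circWord_congr fun i hi => (factorialDigit_factorialBaseValue he hi).symm⟩
    rw [factorialBaseValue_div he (by omega) hk.le, hj_val]
    exact Finset.sum_congr rfl fun i hi => by rw [hed i hi]
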